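/- Let r, γ, T* > 0, let ρ₀ ∈ L^∞(ℝ^d) with ρ₀ ≥ 0 and ‖ρ₀‖_{L^∞} ≤ r, and let ρ, ψ ∈ B_{T*,γ}(r) with ρ_0 = ψ_0 = ρ₀. Then for all t ∈ [0, T*] and x ∈ ℝ^d, | (F(ρ) − F(ψ))_t(x) | ≤ e^{γ⟨c₂⟩t} g(t) ‖ρ − ψ‖_{T*,γ}, where g(t) = t [ (3/2) r² ⟨c₁⟩ e^{2γ⟨c₂⟩t} ( ⟨c₁⟩ t + ⟨φ₁⟩ ) + r e^{γ⟨c₂⟩t} ( 2 ⟨c₁⟩ ⟨c₂⟩ t + 3 ⟨c₁⟩ + 2 ⟨c₂⟩ ⟨φ₂⟩ ) + 2 ⟨c₂⟩ ]. -/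

import Mathlib

open MeasureTheory Set

noncomputable section

/-- Euclidean space `ℝ^d`, modeled as functions `Fin d → ℝ`. -/
abbrev Rd (d : ℕ) := Fin d → ℝ

/-- The (sup) `L^∞` norm of a function on `ℝ^d`. -/
def linf {d : ℕ} (f : Rd d → ℝ) : ℝ := ⨆ x, |f x|

/-- Membership in `L^∞(ℝ^d)`: measurable and (everywhere) bounded. -/
def MemLinf {d : ℕ} (f : Rd d → ℝ) : Prop := Measurable f ∧ ∃ M : ℝ, ∀ x, |f x| ≤ M

/-- `h(ρ,x) = (1/2) ∬ (c₁(x,y;z)+c₁(y,x;z)) ρ(y) dy dz + ⟨c₂⟩`. -/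
def hker {d : ℕ} (c₁ : Rd d → Rd d → Rd d → ℝ) (C2 : ℝ) (ρ : Rd d → ℝ) (x : Rd d) : ℝ :=
  1/2 * (∫ y, ∫ z, (c₁ x y z + c₁ y x z) * ρ y) + C2

/-- `R₂(ρ,x)`, the positive part of the right-hand side of the kinetic equation. -/
def R2 {d : ℕ} (c₁ : Rd d → Rd d → Rd d → ℝ) (c₂ : Rd d → Rd d → ℝ)
    (φ₁ φ₂ : Rd d → ℝ) (ρ : Rd d → ℝ) (x : Rd d) : ℝ :=
  1/2 * (∫ y, ∫ z, c₁ y z x * Real.exp (-∫ u, φ₁ (x - u) * ρ u) * ρ y * ρ z)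
    + 1/2 * (∫ y, ∫ z, (c₁ x y z + c₁ y x z) *
        (1 - Real.exp (-∫ u, φ₁ (z - u) * ρ u)) * ρ x * ρ y)
    + (∫ y, c₂ y x * Real.exp (-∫ u, φ₂ (x - u) * ρ u) * ρ y)
    + (∫ y, c₂ x y * (1 - Real.exp (-∫ u, φ₂ (y - u) * ρ u)) * ρ x)

/-- The fixed point map `F` given by the right-hand side of the integral equation. -/
def Fmap {d : ℕ} (c₁ : Rd d → Rd d → Rd d → ℝ) (c₂ : Rd d → Rd d → ℝ)
    (φ₁ φ₂ : Rd d → ℝ) (C2 : ℝ) (ρ₀ : Rd d → ℝ) (ρ : ℝ → Rd d → ℝ) (t : ℝ) (x : Rd d) : ℝ :=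
  ρ₀ x * Real.exp (-∫ s in (0:ℝ)..t, hker c₁ C2 (ρ s) x)
    + ∫ s in (0:ℝ)..t, R2 c₁ c₂ φ₁ φ₂ (ρ s) x * Real.exp (-∫ σ in s..t, hker c₁ C2 (ρ σ) x)

/-- The weighted norm `‖ρ‖_{T,γ} = sup_{t∈[0,T]} e^{-γ⟨c₂⟩t} ‖ρ_t‖_{L^∞}`. -/
def normTg {d : ℕ} (T γ C2 : ℝ) (ρ : ℝ → Rd d → ℝ) : ℝ :=
  ⨆ t : Icc (0:ℝ) T, Real.exp (-(γ * C2 * t.1)) * linf (ρ t.1)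

/-- Continuity on `S ⊆ ℝ` of a curve of functions, in the `L^∞` norm. -/
def LinfContOn {d : ℕ} (S : Set ℝ) (ρ : ℝ → Rd d → ℝ) : Prop :=
  ∀ t ∈ S, ∀ ε > 0, ∃ δ > 0, ∀ s ∈ S, |s - t| < δ → linf (fun x => ρ s x - ρ t x) < ε

/-- Membership in the ball `B_{T,γ}(r) ⊆ C([0,T] → L^∞)`. -/
def memB {d : ℕ} (T γ C2 r : ℝ) (ρ : ℝ → Rd d → ℝ) : Prop :=
  LinfContOn (Icc 0 T) ρ ∧ (∀ t ∈ Icc (0:ℝ) T, MemLinf (ρ t)) ∧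
    (∀ t ∈ Icc (0:ℝ) T, ∀ x, 0 ≤ ρ t x) ∧ normTg T γ C2 ρ ≤ r

/-- Differentiability at `t` (within `S ⊆ ℝ`) of a curve, in the `L^∞` norm,
with derivative `g`. -/
def HasLinfDerivWithinAt {d : ℕ} (ρ : ℝ → Rd d → ℝ) (g : Rd d → ℝ) (S : Set ℝ) (t : ℝ) : Prop :=
  ∀ ε > 0, ∃ δ > 0, ∀ s ∈ S, |s - t| < δ →
    linf (fun x => ρ s x - ρ t x - (s - t) * g x) ≤ ε * |s - t|

/-- The right-hand side of the kinetic equation: `−ρ(x) h(ρ,x) + R₂(ρ,x)`. -/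
def kderiv {d : ℕ} (c₁ : Rd d → Rd d → Rd d → ℝ) (c₂ : Rd d → Rd d → ℝ)
    (φ₁ φ₂ : Rd d → ℝ) (C2 : ℝ) (ρ : Rd d → ℝ) : Rd d → ℝ :=
  fun x => -(ρ x) * hker c₁ C2 ρ x + R2 c₁ c₂ φ₁ φ₂ ρ x

/-- `ρ` is a (local) classical solution of the kinetic equation on `[0,T]` with initial
value `ρ₀`: nonnegative and `L^∞`-valued, continuously differentiable in the `L^∞` norm,
and satisfying `d/dt ρ_t = −ρ_t·h(ρ_t,·) + R₂(ρ_t,·)`, `ρ_0 = ρ₀`. -/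
def IsSol {d : ℕ} (c₁ : Rd d → Rd d → Rd d → ℝ) (c₂ : Rd d → Rd d → ℝ)
    (φ₁ φ₂ : Rd d → ℝ) (C2 : ℝ) (ρ₀ : Rd d → ℝ) (T : ℝ) (ρ : ℝ → Rd d → ℝ) : Prop :=
  (∀ t ∈ Icc (0:ℝ) T, MemLinf (ρ t)) ∧ (∀ t ∈ Icc (0:ℝ) T, ∀ x, 0 ≤ ρ t x) ∧
    ρ 0 = ρ₀ ∧
    (∀ t ∈ Icc (0:ℝ) T, HasLinfDerivWithinAt ρ (kderiv c₁ c₂ φ₁ φ₂ C2 (ρ t)) (Icc 0 T) t) ∧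
    LinfContOn (Icc 0 T) (fun t => kderiv c₁ c₂ φ₁ φ₂ C2 (ρ t))

/-!
`F(ρ)_t(x)` is a Duhamel formula `a e^{-∫₀ᵗ h₁} + ∫₀ᵗ f₁(s) e^{-∫ₛᵗ h₁} ds` with `h₁(s) = h(ρ_s, x)`
and `f₁(s) = R₂(ρ_s, x)`. As `h ≥ 0` and `e^{-·}` is 1-Lipschitz on `[0, ∞)`, two such formulas
differ by at most `|a| ε_h t + (ε_f + ε_h t M) t`, where `ε_h`, `ε_f` bound `|h₁ - h₂|`, `|f₁ - f₂|`
and `M` bounds `|f₂|`. On `[0, t]` both curves take values in `[0, R]`, `R = r e^{γ⟨c₂⟩t}`, and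
differ by at most `D = e^{γ⟨c₂⟩t} ‖ρ - ψ‖_{T,γ}`. Each term of `h` and `R₂` integrates a bounded
weight against a kernel of mass `⟨c₁⟩` or `⟨c₂⟩`, and the exponents `φ * ρ` move by at most
`⟨φ⟩ D`; this gives `ε_h = ⟨c₁⟩ D`, `M = 3/2 ⟨c₁⟩ R² + 2 ⟨c₂⟩ R` and
`ε_f = (2⟨c₁⟩R + 3/2⟨c₁⟩⟨φ₁⟩R² + 2⟨c₂⟩ + 2⟨c₂⟩⟨φ₂⟩R) D`, which add up to at most
`e^{γ⟨c₂⟩t} g(t) ‖ρ - ψ‖_{T,γ}`. The time integrands are continuous because `s ↦ ρ_s` is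
continuous into `L^∞` and `h`, `R₂` are Lipschitz there.
-/

open Function Real

lemma abs_le_of_mem_Icc {p R : ℝ} (hp : p ∈ Icc 0 R) : |p| ≤ R :=
  (abs_of_nonneg hp.1).trans_le hp.2

lemma abs_mul_le_sq {p q R : ℝ} (hp : p ∈ Icc 0 R) (hq : q ∈ Icc 0 R) : |p * q| ≤ R ^ 2 := by
  rw [abs_of_nonneg (mul_nonneg hp.1 hq.1), sq]
  exact mul_le_mul hp.2 hq.2 hq.1 (hp.1.trans hp.2)

lemma exp_neg_sub_exp_neg_le_mul (a b : ℝ) :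
    exp (-a) - exp (-b) ≤ exp (-a) * (b - a) := by
  have h : exp (-b) = exp (-a) * exp (-(b - a)) := by rw [← Real.exp_add]; ring_nf
  nlinarith [add_one_le_exp (-(b - a)), exp_pos (-a)]

lemma abs_exp_neg_sub_exp_neg_le {a b : ℝ} (ha : 0 ≤ a) (hb : 0 ≤ b) :
    |exp (-a) - exp (-b)| ≤ |a - b| := by
  wlog hab : a ≤ b generalizing a b
  · rw [abs_sub_comm, abs_sub_comm a]
    exact this hb ha (le_of_not_ge hab)
  have h₁ : exp (-a) ≤ 1 := exp_le_one_iff.2 (by linarith)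
  have h₂ : exp (-b) ≤ exp (-a) := exp_le_exp.2 (by linarith)
  rw [abs_of_nonneg (by linarith), abs_of_nonpos (by linarith)]
  nlinarith [exp_neg_sub_exp_neg_le_mul a b, exp_pos (-a)]

lemma exp_neg_mem_Icc {a : ℝ} (ha : 0 ≤ a) : exp (-a) ∈ Icc (0 : ℝ) 1 :=
  ⟨(exp_pos _).le, exp_le_one_iff.2 (by linarith)⟩

lemma one_sub_exp_neg_mem_Icc {a : ℝ} (ha : 0 ≤ a) : 1 - exp (-a) ∈ Icc (0 : ℝ) 1 := by
  have := exp_neg_mem_Icc ha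
  constructor <;> linarith [this.1, this.2]

lemma abs_mul_mul_le {c A p R : ℝ} (hc : 0 ≤ c) (hA : A ∈ Icc (0 : ℝ) 1) (hp : |p| ≤ R) :
    |c * A * p| ≤ c * R := by
  rw [mul_assoc, abs_mul, abs_mul, abs_of_nonneg hc, abs_of_nonneg hA.1]
  exact mul_le_mul_of_nonneg_left
    ((mul_le_mul hA.2 hp (abs_nonneg _) zero_le_one).trans_eq (one_mul R)) hc

lemma abs_mul_sub_mul_le {A B p q W D R : ℝ} (hA : A ∈ Icc (0 : ℝ) 1) (hAB : |A - B| ≤ W)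
    (hq : |q| ≤ R) (hpq : |p - q| ≤ D) : |A * p - B * q| ≤ D + W * R := by
  calc |A * p - B * q| = |A * (p - q) + (A - B) * q| := by ring_nf
    _ ≤ |A| * |p - q| + |A - B| * |q| := by rw [← abs_mul, ← abs_mul]; exact abs_add_le _ _
    _ ≤ 1 * D + W * R := by
        rw [abs_of_nonneg hA.1]
        exact add_le_add (mul_le_mul hA.2 hpq (abs_nonneg _) zero_le_one)
          (mul_le_mul hAB hq (abs_nonneg _) ((abs_nonneg _).trans hAB))
    _ = D + W * R := by ring

lemma abs_mul_sub_mul_le_two_mul {p₁ p₂ q₁ q₂ R D : ℝ} (hp₁ : |p₁| ≤ R) (hq₂ : |q₂| ≤ R)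
    (h₁ : |p₁ - q₁| ≤ D) (h₂ : |p₂ - q₂| ≤ D) : |p₁ * p₂ - q₁ * q₂| ≤ 2 * R * D := by
  calc |p₁ * p₂ - q₁ * q₂| = |p₁ * (p₂ - q₂) + (p₁ - q₁) * q₂| := by ring_nf
    _ ≤ |p₁| * |p₂ - q₂| + |p₁ - q₁| * |q₂| := by
        rw [← abs_mul, ← abs_mul]; exact abs_add_le _ _
    _ ≤ R * D + D * R :=
        add_le_add (mul_le_mul hp₁ h₂ (abs_nonneg _) ((abs_nonneg _).trans hp₁))
          (mul_le_mul h₁ hq₂ (abs_nonneg _) ((abs_nonneg _).trans h₁))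
    _ = 2 * R * D := by ring

/- Writing `A = e^{-a}`, the difference is `(1 - A)(P - Q) + (B - A) Q`, of size at most
`2 R D (1 - A) + Φ D R² A`, and this is `≤ R D (1 + Φ R)` because `A ≥ 1 - a ≥ 1 - Φ R`.
The cruder bound `2 R D + Φ D R²` would not give the coefficient `3⟨c₁⟩` of the theorem. -/
lemma abs_one_sub_exp_mul_sub_le {a b P Q R D Φ : ℝ} (ha : a ∈ Icc 0 (Φ * R))
    (hb : b ∈ Icc 0 (Φ * R)) (hab : |a - b| ≤ Φ * D) (hP : |P| ≤ R ^ 2) (hQ : |Q| ≤ R ^ 2)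
    (hPQ : |P - Q| ≤ 2 * R * D) (hR : 0 ≤ R) (hD : 0 ≤ D) :
    |(1 - exp (-a)) * P - (1 - exp (-b)) * Q| ≤ R * D * (1 + Φ * R) := by
  wlog hle : a ≤ b generalizing a b P Q
  · rw [abs_sub_comm]
    exact this hb ha (by rwa [abs_sub_comm]) hQ hP (by rwa [abs_sub_comm]) (le_of_not_ge hle)
  set A := exp (-a)
  set B := exp (-b)
  have hA : A ∈ Icc (0 : ℝ) 1 := exp_neg_mem_Icc ha.1
  have hBA : B ≤ A := exp_le_exp.2 (by linarith)
  have hAB : A - B ≤ A * (Φ * D) :=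
    (exp_neg_sub_exp_neg_le_mul a b).trans
      (mul_le_mul_of_nonneg_left (by linarith [(abs_le.1 hab).1]) hA.1)
  have hA_ge : (1 - A) * (1 - Φ * R) ≤ A := by
    nlinarith [add_one_le_exp (-a), ha.2, hA.1, hA.2]
  calc |(1 - A) * P - (1 - B) * Q| = |(1 - A) * (P - Q) + (B - A) * Q| := by ring_nf
    _ ≤ (1 - A) * (2 * R * D) + A * (Φ * D) * R ^ 2 := by
        refine (abs_add_le _ _).trans (add_le_add ?_ ?_) <;> rw [abs_mul]
        · rw [abs_of_nonneg (by linarith [hA.2])]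
          exact mul_le_mul_of_nonneg_left hPQ (by linarith [hA.2])
        · rw [abs_of_nonpos (by linarith)]
          exact mul_le_mul (by linarith) hQ (abs_nonneg _) (by nlinarith [hA.1])
    _ ≤ R * D * (1 + Φ * R) := by
        nlinarith [mul_le_mul_of_nonneg_left hA_ge (mul_nonneg hR hD)]

lemma abs_mul_mul_sub_mul_mul_le {c A B p q E : ℝ} (hc : 0 ≤ c) (h : |A * p - B * q| ≤ E) :
    |c * A * p - c * B * q| ≤ c * E := by
  rw [mul_assoc, mul_assoc, ← mul_sub, abs_mul, abs_of_nonneg hc]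
  exact mul_le_mul_of_nonneg_left h hc

section KernelBounds

variable {α β : Type*} [MeasurableSpace α] [MeasurableSpace β] {μ : Measure α} {ν : Measure β}

lemma abs_integral_le_of_abs_le_mul {k F : α → ℝ} {B : ℝ} (hk : Integrable k μ)
    (h : ∀ a, |F a| ≤ k a * B) : |∫ a, F a ∂μ| ≤ (∫ a, k a ∂μ) * B := by
  rw [← integral_mul_const]
  exact norm_integral_le_of_norm_le (f := F) (hk.mul_const B)
    (ae_of_all _ fun a => (h a : ‖F a‖ ≤ _))

lemma integrable_of_abs_le_mul {k F : α → ℝ} {B : ℝ} (hk : Integrable k μ)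
    (hF : AEStronglyMeasurable F μ) (h : ∀ a, |F a| ≤ k a * B) : Integrable F μ :=
  (hk.mul_const B).mono' hF (ae_of_all _ fun a => (h a : ‖F a‖ ≤ _))

lemma abs_integral_sub_le_of_abs_le_mul {k F G : α → ℝ} {B M : ℝ} (hk : Integrable k μ)
    (hF : AEStronglyMeasurable F μ) (hG : AEStronglyMeasurable G μ)
    (hFB : ∀ a, |F a| ≤ k a * B) (hGB : ∀ a, |G a| ≤ k a * B)
    (h : ∀ a, |F a - G a| ≤ k a * M) :
    |(∫ a, F a ∂μ) - ∫ a, G a ∂μ| ≤ (∫ a, k a ∂μ) * M := by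
  rw [← integral_sub (integrable_of_abs_le_mul hk hF hFB) (integrable_of_abs_le_mul hk hG hGB)]
  exact abs_integral_le_of_abs_le_mul hk h

variable [SFinite μ] [SFinite ν]

lemma abs_integral_integral_le_of_abs_le_mul {k F : α → β → ℝ} {B : ℝ}
    (hk : Integrable (uncurry k) (μ.prod ν)) (hF : AEStronglyMeasurable (uncurry F) (μ.prod ν))
    (h : ∀ a b, |F a b| ≤ k a b * B) :
    |∫ a, ∫ b, F a b ∂ν ∂μ| ≤ (∫ a, ∫ b, k a b ∂ν ∂μ) * B := by
  rw [integral_integral (integrable_of_abs_le_mul hk hF fun p => h p.1 p.2),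
    integral_integral hk]
  exact abs_integral_le_of_abs_le_mul hk fun p => h p.1 p.2

lemma abs_integral_integral_sub_le_of_abs_le_mul {k F G : α → β → ℝ} {B M : ℝ}
    (hk : Integrable (uncurry k) (μ.prod ν)) (hF : AEStronglyMeasurable (uncurry F) (μ.prod ν))
    (hG : AEStronglyMeasurable (uncurry G) (μ.prod ν))
    (hFB : ∀ a b, |F a b| ≤ k a b * B) (hGB : ∀ a b, |G a b| ≤ k a b * B)
    (h : ∀ a b, |F a b - G a b| ≤ k a b * M) :
    |(∫ a, ∫ b, F a b ∂ν ∂μ) - ∫ a, ∫ b, G a b ∂ν ∂μ| ≤ (∫ a, ∫ b, k a b ∂ν ∂μ) * M := by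
  rw [integral_integral (integrable_of_abs_le_mul hk hF fun p => hFB p.1 p.2),
    integral_integral (integrable_of_abs_le_mul hk hG fun p => hGB p.1 p.2),
    integral_integral hk]
  exact abs_integral_sub_le_of_abs_le_mul hk hF hG (fun p => hFB p.1 p.2)
    (fun p => hGB p.1 p.2) fun p => h p.1 p.2

end KernelBounds

section Duhamel

variable {h h₁ h₂ f f₁ f₂ : ℝ → ℝ} {t : ℝ}

lemma continuousOn_mul_exp_neg_integral (ht : 0 ≤ t) (hh : ContinuousOn h (Icc 0 t))
    (hf : ContinuousOn f (Icc 0 t)) :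
    ContinuousOn (fun s => f s * exp (-∫ σ in s..t, h σ)) (Icc 0 t) := by
  have hprim := intervalIntegral.continuousOn_primitive_interval_left (μ := volume)
    (hh.integrableOn_Icc.mono_set (uIcc_of_le ht).subset)
  rw [uIcc_of_le ht] at hprim
  exact hf.mul hprim.neg.rexp

lemma abs_exp_neg_integral_sub_le {L : ℝ} (hh₁ : ContinuousOn h₁ (Icc 0 t))
    (hh₂ : ContinuousOn h₂ (Icc 0 t)) (hh₁₀ : ∀ s ∈ Icc 0 t, 0 ≤ h₁ s)
    (hh₂₀ : ∀ s ∈ Icc 0 t, 0 ≤ h₂ s) (hh : ∀ s ∈ Icc 0 t, |h₁ s - h₂ s| ≤ L)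
    {s : ℝ} (hs : s ∈ Icc 0 t) :
    |exp (-∫ σ in s..t, h₁ σ) - exp (-∫ σ in s..t, h₂ σ)| ≤ L * t := by
  have hmem : Icc s t ⊆ Icc 0 t := Icc_subset_Icc_left hs.1
  have hL : 0 ≤ L := (abs_nonneg _).trans (hh t ⟨hs.1.trans hs.2, le_rfl⟩)
  refine (abs_exp_neg_sub_exp_neg_le
    (intervalIntegral.integral_nonneg hs.2 fun σ hσ => hh₁₀ σ (hmem hσ))
    (intervalIntegral.integral_nonneg hs.2 fun σ hσ => hh₂₀ σ (hmem hσ))).trans ?_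
  rw [← intervalIntegral.integral_sub
    ((hh₁.mono ((uIcc_of_le hs.2).trans_subset hmem)).intervalIntegrable)
    ((hh₂.mono ((uIcc_of_le hs.2).trans_subset hmem)).intervalIntegrable)]
  have hint : ‖∫ σ in s..t, h₁ σ - h₂ σ‖ ≤ L * |t - s| :=
    intervalIntegral.norm_integral_le_of_norm_le_const fun σ hσ => by
      rw [uIoc_of_le hs.2] at hσ
      exact hh σ (hmem (Ioc_subset_Icc_self hσ))
  rw [abs_of_nonneg (sub_nonneg.2 hs.2)] at hint
  exact hint.trans (mul_le_mul_of_nonneg_left (by linarith [hs.1]) hL)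

theorem abs_duhamel_sub_le (a : ℝ) {Lh Lf M : ℝ} (ht : 0 ≤ t)
    (hh₁ : ContinuousOn h₁ (Icc 0 t)) (hh₂ : ContinuousOn h₂ (Icc 0 t))
    (hf₁ : ContinuousOn f₁ (Icc 0 t)) (hf₂ : ContinuousOn f₂ (Icc 0 t))
    (hh₁₀ : ∀ s ∈ Icc 0 t, 0 ≤ h₁ s) (hh₂₀ : ∀ s ∈ Icc 0 t, 0 ≤ h₂ s)
    (hh : ∀ s ∈ Icc 0 t, |h₁ s - h₂ s| ≤ Lh) (hf : ∀ s ∈ Icc 0 t, |f₁ s - f₂ s| ≤ Lf)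
    (hM : ∀ s ∈ Icc 0 t, |f₂ s| ≤ M) :
    |(a * exp (-∫ s in 0..t, h₁ s) + ∫ s in 0..t, f₁ s * exp (-∫ σ in s..t, h₁ σ))
      - (a * exp (-∫ s in 0..t, h₂ s) + ∫ s in 0..t, f₂ s * exp (-∫ σ in s..t, h₂ σ))|
      ≤ |a| * (Lh * t) + (Lf + Lh * t * M) * t := by
  have hexp := fun s (hs : s ∈ Icc 0 t) => abs_exp_neg_integral_sub_le hh₁ hh₂ hh₁₀ hh₂₀ hh hs
  have hint : ∀ {f h : ℝ → ℝ}, ContinuousOn h (Icc 0 t) → ContinuousOn f (Icc 0 t) →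
      IntervalIntegrable (fun s => f s * exp (-∫ σ in s..t, h σ)) volume 0 t := fun hh hf =>
    ((continuousOn_mul_exp_neg_integral ht hh hf).mono (uIcc_of_le ht).subset).intervalIntegrable
  rw [add_sub_add_comm, ← mul_sub, ← intervalIntegral.integral_sub (hint hh₁ hf₁) (hint hh₂ hf₂)]
  refine (abs_add_le _ _).trans (add_le_add ?_ ?_)
  · rw [abs_mul]
    exact mul_le_mul_of_nonneg_left (hexp 0 ⟨le_rfl, ht⟩) (abs_nonneg a)
  · have key : ‖∫ s in 0..t, f₁ s * exp (-∫ σ in s..t, h₁ σ) - f₂ s * exp (-∫ σ in s..t, h₂ σ)‖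
        ≤ (Lf + Lh * t * M) * |t - 0| :=
      intervalIntegral.norm_integral_le_of_norm_le_const fun s hs => by
        rw [uIoc_of_le ht] at hs
        have hs' : s ∈ Icc 0 t := Ioc_subset_Icc_self hs
        rw [Real.norm_eq_abs, mul_comm (f₁ s), mul_comm (f₂ s)]
        exact abs_mul_sub_mul_le (exp_neg_mem_Icc (intervalIntegral.integral_nonneg hs'.2
          fun σ hσ => hh₁₀ σ ⟨hs'.1.trans hσ.1, hσ.2⟩)) (hexp s hs') (hM s hs') (hf s hs')
    rwa [sub_zero, abs_of_nonneg ht] at key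

end Duhamel

section Linf

variable {d : ℕ} {f g : Rd d → ℝ}

lemma linf_nonneg (f : Rd d → ℝ) : 0 ≤ linf f :=
  Real.iSup_nonneg fun _ => abs_nonneg _

lemma linf_le {M : ℝ} (h : ∀ x, |f x| ≤ M) : linf f ≤ M :=
  ciSup_le h

lemma MemLinf.abs_le_linf (hf : MemLinf f) (x : Rd d) : |f x| ≤ linf f := by
  obtain ⟨-, M, hM⟩ := hf
  exact le_ciSup ⟨M, by rintro _ ⟨y, rfl⟩; exact hM y⟩ x

lemma MemLinf.sub (hf : MemLinf f) (hg : MemLinf g) : MemLinf fun x => f x - g x :=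
  ⟨hf.1.sub hg.1, linf f + linf g, fun x =>
    (abs_sub _ _).trans (add_le_add (hf.abs_le_linf x) (hg.abs_le_linf x))⟩

lemma abs_linf_sub_linf_le (hf : MemLinf f) (hg : MemLinf g) :
    |linf f - linf g| ≤ linf fun x => f x - g x := by
  have hfg := (hf.sub hg).abs_le_linf
  have hgf : ∀ x, |g x - f x| ≤ linf fun x => f x - g x := fun x => abs_sub_comm (g x) _ ▸ hfg x
  rw [abs_sub_le_iff, sub_le_iff_le_add, sub_le_iff_le_add]
  constructor
  · exact linf_le fun x => by
      linarith [abs_sub_abs_le_abs_sub (f x) (g x), hfg x, hg.abs_le_linf x]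
  · exact linf_le fun x => by
      linarith [abs_sub_abs_le_abs_sub (g x) (f x), hgf x, hf.abs_le_linf x]

end Linf

section Curves

variable {d : ℕ} {S : Set ℝ} {ρ ψ : ℝ → Rd d → ℝ} {T γ C2 r t : ℝ}

lemma LinfContOn.mono {S' : Set ℝ} (hρ : LinfContOn S ρ) (hS : S' ⊆ S) : LinfContOn S' ρ :=
  fun t ht ε hε =>
    let ⟨δ, hδ, h⟩ := hρ t (hS ht) ε hε
    ⟨δ, hδ, fun s hs => h s (hS hs)⟩

lemma LinfContOn.continuousOn_of_abs_sub_le {f : ℝ → ℝ} {L : ℝ} (hρ : LinfContOn S ρ)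
    (hf : ∀ s ∈ S, ∀ u ∈ S, |f s - f u| ≤ L * linf fun x => ρ s x - ρ u x) :
    ContinuousOn f S := by
  refine Metric.continuousOn_iff.2 fun u hu ε hε => ?_
  obtain ⟨δ, hδ, h⟩ := hρ u hu (ε / (|L| + 1)) (by positivity)
  refine ⟨δ, hδ, fun s hs hsu => ?_⟩
  have hl := h s hs hsu
  rw [Real.dist_eq] at hsu ⊢
  calc |f s - f u| ≤ |L| * linf (fun x => ρ s x - ρ u x) :=
        (hf s hs u hu).trans (mul_le_mul_of_nonneg_right (le_abs_self L) (linf_nonneg _))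
    _ ≤ |L| * (ε / (|L| + 1)) := mul_le_mul_of_nonneg_left hl.le (abs_nonneg L)
    _ < ε := by
        rw [mul_div_assoc', div_lt_iff₀ (by positivity)]
        nlinarith [abs_nonneg L]

lemma LinfContOn.bddAbove_linf {a b : ℝ} (hρ : LinfContOn (Icc a b) ρ)
    (hm : ∀ s ∈ Icc a b, MemLinf (ρ s)) : BddAbove ((fun s => linf (ρ s)) '' Icc a b) :=
  isCompact_Icc.bddAbove_image <| hρ.continuousOn_of_abs_sub_le (L := 1) fun s hs u hu =>
    (abs_linf_sub_linf_le (hm s hs) (hm u hu)).trans_eq (one_mul _).symm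

lemma normTg_nonneg : 0 ≤ normTg T γ C2 ρ :=
  Real.iSup_nonneg fun _ => mul_nonneg (exp_pos _).le (linf_nonneg _)

lemma linf_le_exp_mul_normTg (hbdd : BddAbove ((fun s => linf (ρ s)) '' Icc 0 T))
    (hγ : 0 ≤ γ * C2) {s : ℝ} (hs : s ∈ Icc 0 T) :
    linf (ρ s) ≤ exp (γ * C2 * s) * normTg T γ C2 ρ := by
  obtain ⟨K, hK⟩ := hbdd
  have hle : exp (-(γ * C2 * s)) * linf (ρ s) ≤ normTg T γ C2 ρ := by
    refine le_ciSup (f := fun u : Icc (0 : ℝ) T => exp (-(γ * C2 * u.1)) * linf (ρ u.1))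
      ⟨K, ?_⟩ ⟨s, hs⟩
    rintro _ ⟨u, rfl⟩
    exact (mul_le_of_le_one_left (linf_nonneg _)
      (exp_le_one_iff.2 (neg_nonpos.2 (mul_nonneg hγ u.2.1)))).trans (hK ⟨u.1, u.2, rfl⟩)
  calc linf (ρ s) = exp (γ * C2 * s) * (exp (-(γ * C2 * s)) * linf (ρ s)) := by
        rw [← mul_assoc, ← exp_add, add_neg_cancel, exp_zero, one_mul]
    _ ≤ exp (γ * C2 * s) * normTg T γ C2 ρ := mul_le_mul_of_nonneg_left hle (exp_pos _).le

lemma memB.mem_Icc (hρ : memB T γ C2 r ρ) (hγ : 0 ≤ γ * C2) (htT : t ≤ T) :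
    ∀ s ∈ Icc 0 t, ∀ y, ρ s y ∈ Icc 0 (r * exp (γ * C2 * t)) := by
  obtain ⟨hc, hm, hnn, hr⟩ := hρ
  intro s hs y
  have hsT : s ∈ Icc 0 T := ⟨hs.1, hs.2.trans htT⟩
  refine ⟨hnn s hsT y, (le_abs_self _).trans ((hm s hsT).abs_le_linf y) |>.trans ?_⟩
  calc linf (ρ s) ≤ exp (γ * C2 * s) * normTg T γ C2 ρ :=
        linf_le_exp_mul_normTg (hc.bddAbove_linf hm) hγ hsT
    _ ≤ exp (γ * C2 * t) * r :=
        mul_le_mul (exp_le_exp.2 (mul_le_mul_of_nonneg_left hs.2 hγ)) hr normTg_nonneg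
          (exp_pos _).le
    _ = r * exp (γ * C2 * t) := mul_comm _ _

lemma memB.abs_sub_le (hρ : memB T γ C2 r ρ) (hψ : memB T γ C2 r ψ) (hγ : 0 ≤ γ * C2)
    (htT : t ≤ T) : ∀ s ∈ Icc 0 t, ∀ y,
      |ρ s y - ψ s y| ≤ exp (γ * C2 * t) * normTg T γ C2 fun t x => ρ t x - ψ t x := by
  obtain ⟨Kρ, hKρ⟩ := hρ.1.bddAbove_linf hρ.2.1
  obtain ⟨Kψ, hKψ⟩ := hψ.1.bddAbove_linf hψ.2.1
  have hbdd : BddAbove ((fun s => linf fun x => ρ s x - ψ s x) '' Icc 0 T) := by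
    refine ⟨Kρ + Kψ, ?_⟩
    rintro _ ⟨u, hu, rfl⟩
    exact linf_le fun x => (abs_sub _ _).trans (add_le_add
      (((hρ.2.1 u hu).abs_le_linf x).trans (hKρ ⟨u, hu, rfl⟩))
      (((hψ.2.1 u hu).abs_le_linf x).trans (hKψ ⟨u, hu, rfl⟩)))
  intro s hs y
  have hsT : s ∈ Icc 0 T := ⟨hs.1, hs.2.trans htT⟩
  calc |ρ s y - ψ s y| ≤ linf fun x => ρ s x - ψ s x :=
        ((hρ.2.1 s hsT).sub (hψ.2.1 s hsT)).abs_le_linf y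
    _ ≤ exp (γ * C2 * s) * normTg T γ C2 fun t x => ρ t x - ψ t x :=
        linf_le_exp_mul_normTg hbdd hγ hsT
    _ ≤ exp (γ * C2 * t) * normTg T γ C2 fun t x => ρ t x - ψ t x :=
        mul_le_mul_of_nonneg_right (exp_le_exp.2 (mul_le_mul_of_nonneg_left hs.2 hγ)) normTg_nonneg

lemma memB.continuousOn_comp {F : (Rd d → ℝ) → ℝ} {L : ℝ} (hρ : memB T γ C2 r ρ)
    (hγ : 0 ≤ γ * C2) (htT : t ≤ T)
    (hF : ∀ (ρ' ψ' : Rd d → ℝ) (D : ℝ), Measurable ρ' → Measurable ψ' →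
      (∀ y, ρ' y ∈ Icc 0 (r * exp (γ * C2 * t))) → (∀ y, ψ' y ∈ Icc 0 (r * exp (γ * C2 * t))) →
      (∀ y, |ρ' y - ψ' y| ≤ D) → |F ρ' - F ψ'| ≤ L * D) :
    ContinuousOn (fun s => F (ρ s)) (Icc 0 t) := by
  have hm : ∀ s ∈ Icc 0 t, MemLinf (ρ s) := fun s hs => hρ.2.1 s ⟨hs.1, hs.2.trans htT⟩
  refine (hρ.1.mono (Icc_subset_Icc_right htT)).continuousOn_of_abs_sub_le fun s hs u hu =>
    hF _ _ _ (hm s hs).1 (hm u hu).1 (hρ.mem_Icc hγ htT s hs) (hρ.mem_Icc hγ htT u hu)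
      ((hm s hs).sub (hm u hu)).abs_le_linf

end Curves

def convolve {d : ℕ} (φ ρ : Rd d → ℝ) (x : Rd d) : ℝ := ∫ u, φ (x - u) * ρ u

section Convolve

variable {d : ℕ} {φ ρ ψ : Rd d → ℝ} {Φ R D : ℝ}

lemma measurable_convolve (hφ : Measurable φ) (hρ : Measurable ρ) : Measurable (convolve φ ρ) :=
  (Measurable.stronglyMeasurable (by fun_prop : Measurable fun p : Rd d × Rd d =>
    φ (p.1 - p.2) * ρ p.2)).integral_prod_right'.measurable

lemma convolve_mem_Icc (hφ₀ : ∀ u, 0 ≤ φ u) (hφ : Integrable φ) (hΦ : ∫ u, φ u = Φ)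
    (hρ : ∀ y, ρ y ∈ Icc 0 R) (x : Rd d) : convolve φ ρ x ∈ Icc 0 (Φ * R) := by
  refine ⟨integral_nonneg fun u => mul_nonneg (hφ₀ _) (hρ u).1, ?_⟩
  rw [← hΦ, ← integral_sub_left_eq_self φ volume x]
  refine le_of_abs_le (abs_integral_le_of_abs_le_mul (hφ.comp_sub_left x) fun u => ?_)
  rw [abs_mul, abs_of_nonneg (hφ₀ _), abs_of_nonneg (hρ u).1]
  exact mul_le_mul_of_nonneg_left (hρ u).2 (hφ₀ _)

lemma abs_convolve_sub_le (hφm : Measurable φ) (hφ₀ : ∀ u, 0 ≤ φ u) (hφ : Integrable φ)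
    (hΦ : ∫ u, φ u = Φ) (hρm : Measurable ρ) (hψm : Measurable ψ)
    (hρ : ∀ y, ρ y ∈ Icc 0 R) (hψ : ∀ y, ψ y ∈ Icc 0 R) (hD : ∀ y, |ρ y - ψ y| ≤ D)
    (x : Rd d) : |convolve φ ρ x - convolve φ ψ x| ≤ Φ * D := by
  have bound : ∀ ρ' : Rd d → ℝ, (∀ y, ρ' y ∈ Icc 0 R) → ∀ u, |φ (x - u) * ρ' u| ≤ φ (x - u) * R :=
    fun ρ' hρ' u => by
      rw [abs_mul, abs_of_nonneg (hφ₀ _), abs_of_nonneg (hρ' u).1]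
      exact mul_le_mul_of_nonneg_left (hρ' u).2 (hφ₀ _)
  rw [← hΦ, ← integral_sub_left_eq_self φ volume x]
  refine abs_integral_sub_le_of_abs_le_mul (hφ.comp_sub_left x) (by fun_prop) (by fun_prop)
    (bound ρ hρ) (bound ψ hψ) fun u => ?_
  rw [← mul_sub, abs_mul, abs_of_nonneg (hφ₀ _)]
  exact mul_le_mul_of_nonneg_left (hD u) (hφ₀ _)

end Convolve

structure AdmissibleRates {d : ℕ} (c₁ : Rd d → Rd d → Rd d → ℝ) (c₂ : Rd d → Rd d → ℝ)
    (φ₁ φ₂ : Rd d → ℝ) (C1 C2 Φ₁ Φ₂ : ℝ) : Prop where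
  c₁_measurable : Measurable fun p : Rd d × Rd d × Rd d => c₁ p.1 p.2.1 p.2.2
  c₁_nonneg : ∀ x y z, 0 ≤ c₁ x y z
  c₁_symm : ∀ x y z, c₁ x y z = c₁ y x z
  c₁_integrable₁₂ : ∀ z, Integrable fun p : Rd d × Rd d => c₁ p.1 p.2 z
  c₁_integrable₂₃ : ∀ x, Integrable fun p : Rd d × Rd d => c₁ x p.1 p.2
  c₁_integral₁₂ : ∀ z, ∫ x, ∫ y, c₁ x y z = C1
  c₁_integral₂₃ : ∀ x, ∫ y, ∫ z, c₁ x y z = C1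
  c₂_measurable : Measurable fun p : Rd d × Rd d => c₂ p.1 p.2
  c₂_nonneg : ∀ x y, 0 ≤ c₂ x y
  c₂_integrable₁ : ∀ y, Integrable fun x => c₂ x y
  c₂_integrable₂ : ∀ x, Integrable fun y => c₂ x y
  c₂_integral₁ : ∀ y, ∫ x, c₂ x y = C2
  c₂_integral₂ : ∀ x, ∫ y, c₂ x y = C2
  φ₁_measurable : Measurable φ₁
  φ₁_nonneg : ∀ u, 0 ≤ φ₁ u
  φ₁_integrable : Integrable φ₁
  φ₁_integral : ∫ u, φ₁ u = Φ₁
  φ₂_measurable : Measurable φ₂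
  φ₂_nonneg : ∀ u, 0 ≤ φ₂ u
  φ₂_integrable : Integrable φ₂
  φ₂_integral : ∫ u, φ₂ u = Φ₂

def binaryBirth {d : ℕ} (c₁ : Rd d → Rd d → Rd d → ℝ) (φ₁ ρ : Rd d → ℝ) (x : Rd d) : ℝ :=
  ∫ y, ∫ z, c₁ y z x * exp (-convolve φ₁ ρ x) * ρ y * ρ z

def binaryBlocked {d : ℕ} (c₁ : Rd d → Rd d → Rd d → ℝ) (φ₁ ρ : Rd d → ℝ) (x : Rd d) : ℝ :=
  ∫ y, ∫ z, (c₁ x y z + c₁ y x z) * (1 - exp (-convolve φ₁ ρ z)) * ρ x * ρ y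

def jumpIn {d : ℕ} (c₂ : Rd d → Rd d → ℝ) (φ₂ ρ : Rd d → ℝ) (x : Rd d) : ℝ :=
  ∫ y, c₂ y x * exp (-convolve φ₂ ρ x) * ρ y

def jumpBlocked {d : ℕ} (c₂ : Rd d → Rd d → ℝ) (φ₂ ρ : Rd d → ℝ) (x : Rd d) : ℝ :=
  ∫ y, c₂ x y * (1 - exp (-convolve φ₂ ρ y)) * ρ x

lemma R2_eq {d : ℕ} (c₁ : Rd d → Rd d → Rd d → ℝ) (c₂ : Rd d → Rd d → ℝ) (φ₁ φ₂ ρ : Rd d → ℝ)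
    (x : Rd d) : R2 c₁ c₂ φ₁ φ₂ ρ x = 1/2 * binaryBirth c₁ φ₁ ρ x
      + 1/2 * binaryBlocked c₁ φ₁ ρ x + jumpIn c₂ φ₂ ρ x + jumpBlocked c₂ φ₂ ρ x := rfl

namespace AdmissibleRates

variable {d : ℕ} {c₁ : Rd d → Rd d → Rd d → ℝ} {c₂ : Rd d → Rd d → ℝ} {φ₁ φ₂ : Rd d → ℝ}
  {C1 C2 Φ₁ Φ₂ : ℝ}

lemma C1_nonneg (K : AdmissibleRates c₁ c₂ φ₁ φ₂ C1 C2 Φ₁ Φ₂) : 0 ≤ C1 :=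
  K.c₁_integral₂₃ 0 ▸ integral_nonneg fun y => integral_nonneg fun z => K.c₁_nonneg 0 y z

lemma C2_nonneg (K : AdmissibleRates c₁ c₂ φ₁ φ₂ C1 C2 Φ₁ Φ₂) : 0 ≤ C2 :=
  K.c₂_integral₂ 0 ▸ integral_nonneg fun y => K.c₂_nonneg 0 y

section Pointwise

variable {ρ ψ : Rd d → ℝ} {R D : ℝ}

lemma abs_binaryBirth_integrand_le (K : AdmissibleRates c₁ c₂ φ₁ φ₂ C1 C2 Φ₁ Φ₂)
    (hρ : ∀ y, ρ y ∈ Icc 0 R) (x y z : Rd d) :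
    |c₁ y z x * exp (-convolve φ₁ ρ x) * ρ y * ρ z| ≤ c₁ y z x * R ^ 2 := by
  simpa only [mul_assoc] using abs_mul_mul_le (K.c₁_nonneg y z x)
    (exp_neg_mem_Icc (convolve_mem_Icc K.φ₁_nonneg K.φ₁_integrable K.φ₁_integral hρ x).1)
    (abs_mul_le_sq (hρ y) (hρ z))

lemma abs_binaryBlocked_integrand_le (K : AdmissibleRates c₁ c₂ φ₁ φ₂ C1 C2 Φ₁ Φ₂)
    (hρ : ∀ y, ρ y ∈ Icc 0 R) (x y z : Rd d) :
    |(c₁ x y z + c₁ y x z) * (1 - exp (-convolve φ₁ ρ z)) * ρ x * ρ y|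
      ≤ c₁ x y z * (2 * R ^ 2) := by
  have h := abs_mul_mul_le (add_nonneg (K.c₁_nonneg x y z) (K.c₁_nonneg y x z))
    (one_sub_exp_neg_mem_Icc (convolve_mem_Icc K.φ₁_nonneg K.φ₁_integrable K.φ₁_integral hρ z).1)
    (abs_mul_le_sq (hρ x) (hρ y))
  rw [← K.c₁_symm x y z] at h ⊢
  simpa only [mul_assoc, ← two_mul, mul_left_comm _ (2 : ℝ)] using h

lemma abs_jumpIn_integrand_le (K : AdmissibleRates c₁ c₂ φ₁ φ₂ C1 C2 Φ₁ Φ₂)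
    (hρ : ∀ y, ρ y ∈ Icc 0 R) (x y : Rd d) :
    |c₂ y x * exp (-convolve φ₂ ρ x) * ρ y| ≤ c₂ y x * R :=
  abs_mul_mul_le (K.c₂_nonneg y x)
    (exp_neg_mem_Icc (convolve_mem_Icc K.φ₂_nonneg K.φ₂_integrable K.φ₂_integral hρ x).1)
    (abs_le_of_mem_Icc (hρ y))

lemma abs_jumpBlocked_integrand_le (K : AdmissibleRates c₁ c₂ φ₁ φ₂ C1 C2 Φ₁ Φ₂)
    (hρ : ∀ y, ρ y ∈ Icc 0 R) (x y : Rd d) :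
    |c₂ x y * (1 - exp (-convolve φ₂ ρ y)) * ρ x| ≤ c₂ x y * R :=
  abs_mul_mul_le (K.c₂_nonneg x y)
    (one_sub_exp_neg_mem_Icc (convolve_mem_Icc K.φ₂_nonneg K.φ₂_integrable K.φ₂_integral hρ y).1)
    (abs_le_of_mem_Icc (hρ x))

section Lipschitz

variable (K : AdmissibleRates c₁ c₂ φ₁ φ₂ C1 C2 Φ₁ Φ₂) (hρm : Measurable ρ) (hψm : Measurable ψ)
  (hρ : ∀ y, ρ y ∈ Icc 0 R) (hψ : ∀ y, ψ y ∈ Icc 0 R) (hD : ∀ y, |ρ y - ψ y| ≤ D)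

include K hρm hψm hρ hψ hD

lemma abs_binaryBirth_sub_le (x : Rd d) :
    |binaryBirth c₁ φ₁ ρ x - binaryBirth c₁ φ₁ ψ x| ≤ C1 * (2 * R * D + Φ₁ * D * R ^ 2) := by
  have hc := K.c₁_measurable
  have hIρ := convolve_mem_Icc K.φ₁_nonneg K.φ₁_integrable K.φ₁_integral hρ x
  have hIψ := convolve_mem_Icc K.φ₁_nonneg K.φ₁_integrable K.φ₁_integral hψ x
  have hI := abs_convolve_sub_le K.φ₁_measurable K.φ₁_nonneg K.φ₁_integrable K.φ₁_integral
    hρm hψm hρ hψ hD x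
  rw [← K.c₁_integral₁₂ x]
  refine abs_integral_integral_sub_le_of_abs_le_mul (K.c₁_integrable₁₂ x)
    (by fun_prop : Measurable _).aestronglyMeasurable
    (by fun_prop : Measurable _).aestronglyMeasurable
    (K.abs_binaryBirth_integrand_le hρ x) (K.abs_binaryBirth_integrand_le hψ x) fun y z => ?_
  simpa only [mul_assoc] using abs_mul_mul_sub_mul_mul_le (K.c₁_nonneg y z x)
    (abs_mul_sub_mul_le (exp_neg_mem_Icc hIρ.1)
      ((abs_exp_neg_sub_exp_neg_le hIρ.1 hIψ.1).trans hI) (abs_mul_le_sq (hψ y) (hψ z))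
      (abs_mul_sub_mul_le_two_mul (abs_le_of_mem_Icc (hρ y)) (abs_le_of_mem_Icc (hψ z))
        (hD y) (hD z)))

lemma abs_binaryBlocked_sub_le (x : Rd d) :
    |binaryBlocked c₁ φ₁ ρ x - binaryBlocked c₁ φ₁ ψ x|
      ≤ C1 * (2 * (R * D * (1 + Φ₁ * R))) := by
  have hc := K.c₁_measurable
  have hconv := measurable_convolve K.φ₁_measurable hρm
  have hconv' := measurable_convolve K.φ₁_measurable hψm
  have hI := fun z => convolve_mem_Icc K.φ₁_nonneg K.φ₁_integrable K.φ₁_integral hρ z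
  have hI' := fun z => convolve_mem_Icc K.φ₁_nonneg K.φ₁_integrable K.φ₁_integral hψ z
  have hR : 0 ≤ R := (hρ 0).1.trans (hρ 0).2
  have hD₀ : 0 ≤ D := (abs_nonneg _).trans (hD 0)
  rw [← K.c₁_integral₂₃ x]
  refine abs_integral_integral_sub_le_of_abs_le_mul (K.c₁_integrable₂₃ x)
    (by fun_prop : Measurable _).aestronglyMeasurable
    (by fun_prop : Measurable _).aestronglyMeasurable
    (K.abs_binaryBlocked_integrand_le hρ x) (K.abs_binaryBlocked_integrand_le hψ x) fun y z => ?_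
  have h := abs_mul_mul_sub_mul_mul_le (add_nonneg (K.c₁_nonneg x y z) (K.c₁_nonneg y x z))
    (abs_one_sub_exp_mul_sub_le (hI z) (hI' z)
      (abs_convolve_sub_le K.φ₁_measurable K.φ₁_nonneg K.φ₁_integrable K.φ₁_integral
        hρm hψm hρ hψ hD z)
      (abs_mul_le_sq (hρ x) (hρ y)) (abs_mul_le_sq (hψ x) (hψ y))
      (abs_mul_sub_mul_le_two_mul (abs_le_of_mem_Icc (hρ x)) (abs_le_of_mem_Icc (hψ y))
        (hD x) (hD y)) hR hD₀)
  rw [← K.c₁_symm x y z] at h ⊢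
  simpa only [mul_assoc, ← two_mul, mul_left_comm _ (2 : ℝ)] using h

lemma abs_jumpIn_sub_le (x : Rd d) :
    |jumpIn c₂ φ₂ ρ x - jumpIn c₂ φ₂ ψ x| ≤ C2 * (D + Φ₂ * D * R) := by
  have hc := K.c₂_measurable
  have hIρ := convolve_mem_Icc K.φ₂_nonneg K.φ₂_integrable K.φ₂_integral hρ x
  have hIψ := convolve_mem_Icc K.φ₂_nonneg K.φ₂_integrable K.φ₂_integral hψ x
  have hI := abs_convolve_sub_le K.φ₂_measurable K.φ₂_nonneg K.φ₂_integrable K.φ₂_integral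
    hρm hψm hρ hψ hD x
  rw [← K.c₂_integral₁ x]
  refine abs_integral_sub_le_of_abs_le_mul (K.c₂_integrable₁ x)
    (by fun_prop : Measurable _).aestronglyMeasurable
    (by fun_prop : Measurable _).aestronglyMeasurable
    (K.abs_jumpIn_integrand_le hρ x) (K.abs_jumpIn_integrand_le hψ x) fun y => ?_
  exact abs_mul_mul_sub_mul_mul_le (K.c₂_nonneg y x)
    (abs_mul_sub_mul_le (exp_neg_mem_Icc hIρ.1)
      ((abs_exp_neg_sub_exp_neg_le hIρ.1 hIψ.1).trans hI) (abs_le_of_mem_Icc (hψ y)) (hD y))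

lemma abs_jumpBlocked_sub_le (x : Rd d) :
    |jumpBlocked c₂ φ₂ ρ x - jumpBlocked c₂ φ₂ ψ x| ≤ C2 * (D + Φ₂ * D * R) := by
  have hc := K.c₂_measurable
  have hconv := measurable_convolve K.φ₂_measurable hρm
  have hconv' := measurable_convolve K.φ₂_measurable hψm
  rw [← K.c₂_integral₂ x]
  refine abs_integral_sub_le_of_abs_le_mul (K.c₂_integrable₂ x)
    (by fun_prop : Measurable _).aestronglyMeasurable
    (by fun_prop : Measurable _).aestronglyMeasurable
    (K.abs_jumpBlocked_integrand_le hρ x) (K.abs_jumpBlocked_integrand_le hψ x) fun y => ?_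
  have hIρ := convolve_mem_Icc K.φ₂_nonneg K.φ₂_integrable K.φ₂_integral hρ y
  have hIψ := convolve_mem_Icc K.φ₂_nonneg K.φ₂_integrable K.φ₂_integral hψ y
  refine abs_mul_mul_sub_mul_mul_le (K.c₂_nonneg x y)
    (abs_mul_sub_mul_le (one_sub_exp_neg_mem_Icc hIρ.1) ?_ (abs_le_of_mem_Icc (hψ x)) (hD x))
  rw [sub_sub_sub_cancel_left, abs_sub_comm]
  exact (abs_exp_neg_sub_exp_neg_le hIρ.1 hIψ.1).trans
    (abs_convolve_sub_le K.φ₂_measurable K.φ₂_nonneg K.φ₂_integrable K.φ₂_integral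
      hρm hψm hρ hψ hD y)

lemma abs_R2_sub_le (x : Rd d) :
    |R2 c₁ c₂ φ₁ φ₂ ρ x - R2 c₁ c₂ φ₁ φ₂ ψ x|
      ≤ (2 * C1 * R + 3/2 * C1 * Φ₁ * R ^ 2 + 2 * C2 + 2 * C2 * Φ₂ * R) * D := by
  have h₁ := abs_le.1 (K.abs_binaryBirth_sub_le hρm hψm hρ hψ hD x)
  have h₂ := abs_le.1 (K.abs_binaryBlocked_sub_le hρm hψm hρ hψ hD x)
  have h₃ := abs_le.1 (K.abs_jumpIn_sub_le hρm hψm hρ hψ hD x)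
  have h₄ := abs_le.1 (K.abs_jumpBlocked_sub_le hρm hψm hρ hψ hD x)
  rw [R2_eq, R2_eq, abs_le]
  constructor <;> linarith [h₁.1, h₁.2, h₂.1, h₂.2, h₃.1, h₃.2, h₄.1, h₄.2]

lemma abs_hker_sub_le (x : Rd d) : |hker c₁ C2 ρ x - hker c₁ C2 ψ x| ≤ C1 * D := by
  have hc := K.c₁_measurable
  have bound : ∀ ρ' : Rd d → ℝ, (∀ y, ρ' y ∈ Icc 0 R) → ∀ y z,
      |(c₁ x y z + c₁ y x z) * ρ' y| ≤ c₁ x y z * (2 * R) := fun ρ' hρ' y z => by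
    rw [← K.c₁_symm x y z, abs_mul, abs_of_nonneg (by linarith [K.c₁_nonneg x y z]),
      abs_of_nonneg (hρ' y).1]
    nlinarith [K.c₁_nonneg x y z, (hρ' y).2]
  have h := abs_integral_integral_sub_le_of_abs_le_mul (K.c₁_integrable₂₃ x)
    (by fun_prop : Measurable _).aestronglyMeasurable
    (by fun_prop : Measurable _).aestronglyMeasurable (bound ρ hρ) (bound ψ hψ)
    (M := 2 * D) fun y z => by
      rw [← mul_sub, ← K.c₁_symm x y z, abs_mul, abs_of_nonneg (by linarith [K.c₁_nonneg x y z])]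
      nlinarith [K.c₁_nonneg x y z, hD y]
  rw [K.c₁_integral₂₃ x] at h
  rw [hker, hker, add_sub_add_right_eq_sub, ← mul_sub, abs_mul, abs_of_pos (by norm_num)]
  linarith

end Lipschitz

lemma hker_nonneg (K : AdmissibleRates c₁ c₂ φ₁ φ₂ C1 C2 Φ₁ Φ₂) (hρ : ∀ y, 0 ≤ ρ y) (x : Rd d) :
    0 ≤ hker c₁ C2 ρ x :=
  add_nonneg (mul_nonneg (by norm_num) (integral_nonneg fun y => integral_nonneg fun z =>
    mul_nonneg (add_nonneg (K.c₁_nonneg x y z) (K.c₁_nonneg y x z)) (hρ y))) K.C2_nonneg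

lemma abs_R2_le (K : AdmissibleRates c₁ c₂ φ₁ φ₂ C1 C2 Φ₁ Φ₂) (hρm : Measurable ρ)
    (hρ : ∀ y, ρ y ∈ Icc 0 R) (x : Rd d) :
    |R2 c₁ c₂ φ₁ φ₂ ρ x| ≤ 3/2 * C1 * R ^ 2 + 2 * C2 * R := by
  have hc := K.c₁_measurable
  have hconv := measurable_convolve K.φ₁_measurable hρm
  have h₁ : |binaryBirth c₁ φ₁ ρ x| ≤ C1 * R ^ 2 := by
    rw [← K.c₁_integral₁₂ x]
    exact abs_integral_integral_le_of_abs_le_mul (K.c₁_integrable₁₂ x)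
      (by fun_prop : Measurable _).aestronglyMeasurable (K.abs_binaryBirth_integrand_le hρ x)
  have h₂ : |binaryBlocked c₁ φ₁ ρ x| ≤ C1 * (2 * R ^ 2) := by
    rw [← K.c₁_integral₂₃ x]
    exact abs_integral_integral_le_of_abs_le_mul (K.c₁_integrable₂₃ x)
      (by fun_prop : Measurable _).aestronglyMeasurable (K.abs_binaryBlocked_integrand_le hρ x)
  have h₃ : |jumpIn c₂ φ₂ ρ x| ≤ C2 * R := by
    rw [← K.c₂_integral₁ x]
    exact abs_integral_le_of_abs_le_mul (K.c₂_integrable₁ x) (K.abs_jumpIn_integrand_le hρ x)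
  have h₄ : |jumpBlocked c₂ φ₂ ρ x| ≤ C2 * R := by
    rw [← K.c₂_integral₂ x]
    exact abs_integral_le_of_abs_le_mul (K.c₂_integrable₂ x) (K.abs_jumpBlocked_integrand_le hρ x)
  rw [R2_eq, abs_le]
  constructor <;> linarith [(abs_le.1 h₁).1, (abs_le.1 h₁).2, (abs_le.1 h₂).1, (abs_le.1 h₂).2,
    (abs_le.1 h₃).1, (abs_le.1 h₃).2, (abs_le.1 h₄).1, (abs_le.1 h₄).2]

end Pointwise

variable {ρ : ℝ → Rd d → ℝ} {T γ r t : ℝ}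

lemma continuousOn_hker (K : AdmissibleRates c₁ c₂ φ₁ φ₂ C1 C2 Φ₁ Φ₂) (hρ : memB T γ C2 r ρ)
    (hγ : 0 ≤ γ * C2) (htT : t ≤ T) (x : Rd d) :
    ContinuousOn (fun s => hker c₁ C2 (ρ s) x) (Icc 0 t) :=
  hρ.continuousOn_comp (F := fun ρ' => hker c₁ C2 ρ' x) hγ htT
    fun _ _ _ hm hm' hb hb' hD => K.abs_hker_sub_le hm hm' hb hb' hD x

lemma continuousOn_R2 (K : AdmissibleRates c₁ c₂ φ₁ φ₂ C1 C2 Φ₁ Φ₂) (hρ : memB T γ C2 r ρ)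
    (hγ : 0 ≤ γ * C2) (htT : t ≤ T) (x : Rd d) :
    ContinuousOn (fun s => R2 c₁ c₂ φ₁ φ₂ (ρ s) x) (Icc 0 t) :=
  hρ.continuousOn_comp (F := fun ρ' => R2 c₁ c₂ φ₁ φ₂ ρ' x) hγ htT
    fun _ _ _ hm hm' hb hb' hD => K.abs_R2_sub_le hm hm' hb hb' hD x

end AdmissibleRates

theorem statement15_general {d : ℕ}
    (c₁ : Rd d → Rd d → Rd d → ℝ) (C1 : ℝ)
    (hc₁meas : Measurable fun p : Rd d × Rd d × Rd d => c₁ p.1 p.2.1 p.2.2)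
    (hc₁nn : ∀ x y z, 0 ≤ c₁ x y z)
    (hc₁sym : ∀ x y z, c₁ x y z = c₁ y x z)
    (hc₁int₁₂ : ∀ z, Integrable fun p : Rd d × Rd d => c₁ p.1 p.2 z)
    (hc₁int₂₃ : ∀ x, Integrable fun p : Rd d × Rd d => c₁ x p.1 p.2)
    (hc₁val₁₂ : ∀ z, (∫ x, ∫ y, c₁ x y z) = C1)
    (hc₁val₂₃ : ∀ x, (∫ y, ∫ z, c₁ x y z) = C1)
    (c₂ : Rd d → Rd d → ℝ) (C2 : ℝ)
    (hc₂meas : Measurable fun p : Rd d × Rd d => c₂ p.1 p.2)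
    (hc₂nn : ∀ x y, 0 ≤ c₂ x y)
    (hc₂int₁ : ∀ y, Integrable fun x => c₂ x y)
    (hc₂int₂ : ∀ x, Integrable fun y => c₂ x y)
    (hc₂val₁ : ∀ y, (∫ x, c₂ x y) = C2)
    (hc₂val₂ : ∀ x, (∫ y, c₂ x y) = C2)
    (φ₁ : Rd d → ℝ) (Φ₁ : ℝ) (hφ₁meas : Measurable φ₁) (hφ₁nn : ∀ u, 0 ≤ φ₁ u)
    (hφ₁int : Integrable φ₁) (hφ₁val : (∫ u, φ₁ u) = Φ₁)
    (φ₂ : Rd d → ℝ) (Φ₂ : ℝ) (hφ₂meas : Measurable φ₂) (hφ₂nn : ∀ u, 0 ≤ φ₂ u)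
    (hφ₂int : Integrable φ₂) (hφ₂val : (∫ u, φ₂ u) = Φ₂)
    (r γ T' : ℝ) (hγ : 0 < γ)
    (ρ₀ : Rd d → ℝ) (hρ₀mem : MemLinf ρ₀)
    (hρ₀r : linf ρ₀ ≤ r)
    (ρ ψ : ℝ → Rd d → ℝ) (hρ : memB T' γ C2 r ρ) (hψ : memB T' γ C2 r ψ) :
    ∀ t ∈ Icc (0:ℝ) T', ∀ x : Rd d,
      |Fmap c₁ c₂ φ₁ φ₂ C2 ρ₀ ρ t x - Fmap c₁ c₂ φ₁ φ₂ C2 ρ₀ ψ t x|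
        ≤ Real.exp (γ * C2 * t) *
            (t * (3/2 * r^2 * C1 * Real.exp (2 * γ * C2 * t) * (C1 * t + Φ₁)
              + r * Real.exp (γ * C2 * t) * (2 * C1 * C2 * t + 3 * C1 + 2 * C2 * Φ₂)
              + 2 * C2))
          * normTg T' γ C2 (fun t x => ρ t x - ψ t x) := by
  intro t ht x
  have K : AdmissibleRates c₁ c₂ φ₁ φ₂ C1 C2 Φ₁ Φ₂ := ⟨hc₁meas, hc₁nn, hc₁sym, hc₁int₁₂,
    hc₁int₂₃, hc₁val₁₂, hc₁val₂₃, hc₂meas, hc₂nn, hc₂int₁, hc₂int₂, hc₂val₁, hc₂val₂,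
    hφ₁meas, hφ₁nn, hφ₁int, hφ₁val, hφ₂meas, hφ₂nn, hφ₂int, hφ₂val⟩
  have hγC : 0 ≤ γ * C2 := mul_nonneg hγ.le K.C2_nonneg
  have hm : ∀ {ϱ : ℝ → Rd d → ℝ}, memB T' γ C2 r ϱ → ∀ s ∈ Icc 0 t, Measurable (ϱ s) :=
    fun hϱ s hs => (hϱ.2.1 s ⟨hs.1, hs.2.trans ht.2⟩).1
  have hb := hρ.mem_Icc hγC ht.2
  have hb' := hψ.mem_Icc hγC ht.2
  have hD := hρ.abs_sub_le hψ hγC ht.2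
  refine (abs_duhamel_sub_le (ρ₀ x) ht.1 (K.continuousOn_hker hρ hγC ht.2 x)
    (K.continuousOn_hker hψ hγC ht.2 x) (K.continuousOn_R2 hρ hγC ht.2 x)
    (K.continuousOn_R2 hψ hγC ht.2 x)
    (fun s hs => K.hker_nonneg (fun y => (hb s hs y).1) x)
    (fun s hs => K.hker_nonneg (fun y => (hb' s hs y).1) x)
    (fun s hs => K.abs_hker_sub_le (hm hρ s hs) (hm hψ s hs) (hb s hs) (hb' s hs) (hD s hs) x)
    (fun s hs => K.abs_R2_sub_le (hm hρ s hs) (hm hψ s hs) (hb s hs) (hb' s hs) (hD s hs) x)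
    (fun s hs => K.abs_R2_le (hm hψ s hs) (hb' s hs) x)).trans ?_
  set E := exp (γ * C2 * t)
  set N := normTg T' γ C2 fun t x => ρ t x - ψ t x
  have hρ₀x : |ρ₀ x| ≤ r := (hρ₀mem.abs_le_linf x).trans hρ₀r
  have hE : 1 ≤ E := one_le_exp (mul_nonneg hγC ht.1)
  have hN : 0 ≤ N := normTg_nonneg
  have hC1 := K.C1_nonneg
  rw [show exp (2 * γ * C2 * t) = E ^ 2 by rw [sq, ← exp_add]; ring_nf]
  -- `g` allows the factor `E²` where the `ρ₀` term only needs `E`; the rest matches exactly.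
  have hP : 0 ≤ C1 * (E * N) * t := mul_nonneg (mul_nonneg hC1 (by positivity)) ht.1
  have hslack : 0 ≤ r * C1 * t * N * (E ^ 2 - E) :=
    mul_nonneg (mul_nonneg (mul_nonneg (mul_nonneg ((abs_nonneg _).trans hρ₀x) hC1) ht.1) hN)
      (by nlinarith)
  linear_combination mul_le_mul_of_nonneg_right hρ₀x hP + hslack

theorem statement15 {d : ℕ} (hd : 1 ≤ d)
    (c₁ : Rd d → Rd d → Rd d → ℝ) (C1 : ℝ)
    (hc₁meas : Measurable fun p : Rd d × Rd d × Rd d => c₁ p.1 p.2.1 p.2.2)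
    (hc₁nn : ∀ x y z, 0 ≤ c₁ x y z)
    (hc₁sym : ∀ x y z, c₁ x y z = c₁ y x z)
    (hc₁int₁₂ : ∀ z, Integrable fun p : Rd d × Rd d => c₁ p.1 p.2 z)
    (hc₁int₁₃ : ∀ y, Integrable fun p : Rd d × Rd d => c₁ p.1 y p.2)
    (hc₁int₂₃ : ∀ x, Integrable fun p : Rd d × Rd d => c₁ x p.1 p.2)
    (hc₁val₁₂ : ∀ z, (∫ x, ∫ y, c₁ x y z) = C1)
    (hc₁val₁₃ : ∀ y, (∫ x, ∫ z, c₁ x y z) = C1)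
    (hc₁val₂₃ : ∀ x, (∫ y, ∫ z, c₁ x y z) = C1)
    (c₂ : Rd d → Rd d → ℝ) (C2 : ℝ)
    (hc₂meas : Measurable fun p : Rd d × Rd d => c₂ p.1 p.2)
    (hc₂nn : ∀ x y, 0 ≤ c₂ x y)
    (hc₂int₁ : ∀ y, Integrable fun x => c₂ x y)
    (hc₂int₂ : ∀ x, Integrable fun y => c₂ x y)
    (hc₂val₁ : ∀ y, (∫ x, c₂ x y) = C2)
    (hc₂val₂ : ∀ x, (∫ y, c₂ x y) = C2)
    (φ₁ : Rd d → ℝ) (Φ₁ : ℝ) (hφ₁meas : Measurable φ₁) (hφ₁nn : ∀ u, 0 ≤ φ₁ u)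
    (hφ₁int : Integrable φ₁) (hφ₁val : (∫ u, φ₁ u) = Φ₁)
    (φ₂ : Rd d → ℝ) (Φ₂ : ℝ) (hφ₂meas : Measurable φ₂) (hφ₂nn : ∀ u, 0 ≤ φ₂ u)
    (hφ₂int : Integrable φ₂) (hφ₂val : (∫ u, φ₂ u) = Φ₂)
    (r γ T' : ℝ) (hr : 0 < r) (hγ : 0 < γ) (hT' : 0 < T')
    (ρ₀ : Rd d → ℝ) (hρ₀mem : MemLinf ρ₀) (hρ₀nn : ∀ x, 0 ≤ ρ₀ x)
    (hρ₀r : linf ρ₀ ≤ r)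
    (ρ ψ : ℝ → Rd d → ℝ) (hρ : memB T' γ C2 r ρ) (hψ : memB T' γ C2 r ψ)
    (hρ0 : ρ 0 = ρ₀) (hψ0 : ψ 0 = ρ₀) :
    ∀ t ∈ Icc (0:ℝ) T', ∀ x : Rd d,
      |Fmap c₁ c₂ φ₁ φ₂ C2 ρ₀ ρ t x - Fmap c₁ c₂ φ₁ φ₂ C2 ρ₀ ψ t x|
        ≤ Real.exp (γ * C2 * t) *
            (t * (3/2 * r^2 * C1 * Real.exp (2 * γ * C2 * t) * (C1 * t + Φ₁)
              + r * Real.exp (γ * C2 * t) * (2 * C1 * C2 * t + 3 * C1 + 2 * C2 * Φ₂)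
              + 2 * C2))
          * normTg T' γ C2 (fun t x => ρ t x - ψ t x) :=
  statement15_general c₁ C1 hc₁meas hc₁nn hc₁sym hc₁int₁₂ hc₁int₂₃ hc₁val₁₂ hc₁val₂₃ c₂ C2 hc₂meas
    hc₂nn hc₂int₁ hc₂int₂ hc₂val₁ hc₂val₂ φ₁ Φ₁ hφ₁meas hφ₁nn hφ₁int hφ₁val φ₂ Φ₂ hφ₂meas hφ₂nn
    hφ₂int hφ₂val r γ T' hγ ρ₀ hρ₀mem hρ₀r ρ ψ hρ hψ
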